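/- arXiv:2205.14771 — 3 statements merged into one kernel-verified Lean document; each statement's English description precedes it below -/
import Mathlib

section
/- Let n ≥ 1, let ε > 0, let g : ℝ → ℝ be a smooth function with g ≥ 0, and let f_j : [0,∞) → ℝ (j = 1,…,n) be smooth, nonnegative, nonincreasing functions. Define h : ℝ^{2n+1} → ℝ by h(x,y,z) = ε + g(z)·∏_{j=1}^n f_j(r_j), where r_j = √(x_j² + y_j²), and assume h is differentiable. If Y : ℝ^{2n+1} → ℝ^{2n+1} is a contact Hamiltonian vector field of h with respect to α, then the z-component of Y(p) is at most −ε for every p ∈ ℝ^{2n+1}. -/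
/-- `ℝ^{2n+1}` with coordinates `(x, y, z)`. -/
abbrev EucOdd (n : ℕ) := (Fin n → ℝ) × (Fin n → ℝ) × ℝ

/-- The standard contact form `α = dz + ∑ (x_j dy_j − y_j dx_j)`:
`α_p v = v_z + ∑ j (x_j v_{y_j} − y_j v_{x_j})`. -/
noncomputable def stdContactForm (n : ℕ) (p v : EucOdd n) : ℝ :=
  v.2.2 + ∑ j : Fin n, (p.1 j * v.2.1 j - p.2.1 j * v.1 j)

/-- The exterior derivative of the standard contact form:
`(dα)_p (u, v) = 2 ∑ j (u_{x_j} v_{y_j} − u_{y_j} v_{x_j})`. -/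
noncomputable def stdContactFormD (n : ℕ) (p u v : EucOdd n) : ℝ :=
  2 * ∑ j : Fin n, (u.1 j * v.2.1 j - u.2.1 j * v.1 j)

/-- The unit vector in the `z`-direction. -/
def ez (n : ℕ) : EucOdd n := (0, 0, 1)

/-- `Y` is a contact Hamiltonian vector field of `h` with respect to the standard
contact form `α`: for all `p` and `v`, `α_p (Y p) = −h p` and
`(dα)_p (Y p, v) = Dh_p v − Dh_p (e_z) · α_p v`. -/
def IsContactHamVF (n : ℕ) (h : EucOdd n → ℝ) (Y : EucOdd n → EucOdd n) : Prop :=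
  ∀ p v : EucOdd n,
    stdContactForm n p (Y p) = -h p ∧
    stdContactFormD n p (Y p) v =
      fderiv ℝ h p v - fderiv ℝ h p (ez n) * stdContactForm n p v

theorem z_component_le_neg_eps (n : ℕ) (hn : 1 ≤ n) (ε : ℝ) (hε : 0 < ε)
    (g : ℝ → ℝ) (hg : ContDiff ℝ (⊤ : ℕ∞) g) (hg0 : ∀ t, 0 ≤ g t)
    (f : Fin n → ℝ → ℝ)
    (hf : ∀ j, ContDiffOn ℝ (⊤ : ℕ∞) (f j) (Set.Ici 0))
    (hf0 : ∀ j, ∀ t ∈ Set.Ici (0 : ℝ), 0 ≤ f j t)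
    (hfmono : ∀ j, AntitoneOn (f j) (Set.Ici 0))
    (h : EucOdd n → ℝ)
    (hdef : ∀ p : EucOdd n,
      h p = ε + g p.2.2 * ∏ j : Fin n, f j (Real.sqrt ((p.1 j) ^ 2 + (p.2.1 j) ^ 2)))
    (hdiff : Differentiable ℝ h)
    (Y : EucOdd n → EucOdd n) (hY : IsContactHamVF n h Y) :
    ∀ p : EucOdd n, (Y p).2.2 ≤ -ε := by
  intro p
  obtain ⟨x, y, z⟩ := p
  set p : EucOdd n := (x, y, z) with hp
  set v : EucOdd n := (x, y, 0) with hv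
  set D : ℝ := fderiv ℝ h p v with hD
  -- h ≥ ε everywhere
  have hge : ε ≤ h p := by
    rw [hdef p]
    have h1 : 0 ≤ ∏ j : Fin n, f j (Real.sqrt ((p.1 j) ^ 2 + (p.2.1 j) ^ 2)) :=
      Finset.prod_nonneg fun j _ => hf0 j _ (Real.sqrt_nonneg _)
    nlinarith [hg0 p.2.2]
  -- the radial curve
  set φ : ℝ → ℝ := fun t => h ((1 + t) • x, (1 + t) • y, z) with hφ
  have hp0 : (((1 + (0:ℝ)) • x, (1 + (0:ℝ)) • y, z) : EucOdd n) = p := by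
    simp [hp]
  have hL : HasDerivAt (fun t : ℝ => (((1 + t) • x, (1 + t) • y, z) : EucOdd n)) (x, y, 0) 0 := by
    have h1 : HasDerivAt (fun t : ℝ => 1 + t) 1 0 := by
      simpa using (hasDerivAt_id (0 : ℝ)).const_add 1
    have hx : HasDerivAt (fun t : ℝ => (1 + t) • x) x 0 := by simpa using h1.smul_const x
    have hy' : HasDerivAt (fun t : ℝ => (1 + t) • y) y 0 := by simpa using h1.smul_const y
    exact hx.prodMk (hy'.prodMk (hasDerivAt_const 0 z))
  have hφd : HasDerivAt φ D 0 := by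
    have hF : HasFDerivAt h (fderiv ℝ h p) (((1 + (0:ℝ)) • x, (1 + (0:ℝ)) • y, z) : EucOdd n) := by
      rw [hp0]; exact (hdiff p).hasFDerivAt
    exact hF.comp_hasDerivAt 0 hL
  -- φ is nonincreasing for t ≥ 0
  have hmono : ∀ t : ℝ, 0 ≤ t → φ t ≤ φ 0 := by
    intro t ht
    have h1t : (0:ℝ) ≤ 1 + t := by linarith
    simp only [hφ]
    rw [hdef, hdef]
    have key : ∀ j : Fin n,
        f j (Real.sqrt ((((1 + t) • x, (1 + t) • y, z) : EucOdd n).1 j ^ 2 +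
          (((1 + t) • x, (1 + t) • y, z) : EucOdd n).2.1 j ^ 2)) ≤
        f j (Real.sqrt ((((1 + (0:ℝ)) • x, (1 + (0:ℝ)) • y, z) : EucOdd n).1 j ^ 2 +
          (((1 + (0:ℝ)) • x, (1 + (0:ℝ)) • y, z) : EucOdd n).2.1 j ^ 2)) := by
      intro j
      have e0 : (((1 + (0:ℝ)) • x, (1 + (0:ℝ)) • y, z) : EucOdd n).1 j = x j := by simp
      have e0' : (((1 + (0:ℝ)) • x, (1 + (0:ℝ)) • y, z) : EucOdd n).2.1 j = y j := by simp
      have e1 : (((1 + t) • x, (1 + t) • y, z) : EucOdd n).1 j = (1 + t) * x j := by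
        simp [Pi.smul_apply, smul_eq_mul]
      have e1' : (((1 + t) • x, (1 + t) • y, z) : EucOdd n).2.1 j = (1 + t) * y j := by
        simp [Pi.smul_apply, smul_eq_mul]
      rw [e0, e0', e1, e1']
      have esq : ((1 + t) * x j) ^ 2 + ((1 + t) * y j) ^ 2 = (1 + t) ^ 2 * (x j ^ 2 + y j ^ 2) := by
        ring
      have esqrt : Real.sqrt (((1 + t) * x j) ^ 2 + ((1 + t) * y j) ^ 2) =
          (1 + t) * Real.sqrt (x j ^ 2 + y j ^ 2) := by
        rw [esq, Real.sqrt_mul (by positivity), Real.sqrt_sq h1t]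
      rw [esqrt]
      have hr : (0:ℝ) ≤ Real.sqrt (x j ^ 2 + y j ^ 2) := Real.sqrt_nonneg _
      exact hfmono j hr (mul_nonneg h1t hr) (by nlinarith)
    have hprod : ∏ j : Fin n,
        f j (Real.sqrt ((((1 + t) • x, (1 + t) • y, z) : EucOdd n).1 j ^ 2 +
          (((1 + t) • x, (1 + t) • y, z) : EucOdd n).2.1 j ^ 2)) ≤
        ∏ j : Fin n,
        f j (Real.sqrt ((((1 + (0:ℝ)) • x, (1 + (0:ℝ)) • y, z) : EucOdd n).1 j ^ 2 +
          (((1 + (0:ℝ)) • x, (1 + (0:ℝ)) • y, z) : EucOdd n).2.1 j ^ 2)) := by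
      apply Finset.prod_le_prod
      · intro j _; exact hf0 j _ (Real.sqrt_nonneg _)
      · intro j _; exact key j
    have := mul_le_mul_of_nonneg_left hprod (hg0 z)
    simpa using this
  -- D ≤ 0 by taking right-sided difference quotients
  have hDle : D ≤ 0 := by
    have hslope := hasDerivAt_iff_tendsto_slope.mp hφd
    have hsub : Set.Ioi (0:ℝ) ⊆ {(0:ℝ)}ᶜ := fun t ht => ne_of_gt ht
    have hslope' : Filter.Tendsto (slope φ 0) (nhdsWithin 0 (Set.Ioi 0)) (nhds D) :=
      hslope.mono_left (nhdsWithin_mono 0 hsub)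
    refine le_of_tendsto hslope' ?_
    filter_upwards [self_mem_nhdsWithin] with t ht
    have hts : slope φ 0 t = (φ t - φ 0) / t := by
      simp [slope_def_field]
    rw [hts]
    apply div_nonpos_of_nonpos_of_nonneg
    · linarith [hmono t (le_of_lt ht)]
    · exact le_of_lt ht
  -- extract the equations
  have e1 := (hY p p).1
  have e2 := (hY p v).2
  have hαv : stdContactForm n p v = 0 := by
    simp [stdContactForm, hv, hp, mul_comm]
  rw [hαv, mul_zero, sub_zero] at e2
  -- e2 : stdContactFormD n p (Y p) v = D
  set S : ℝ := ∑ j : Fin n, ((Y p).1 j * y j - (Y p).2.1 j * x j) with hS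
  have e2' : 2 * S = D := by
    rw [hD, ← e2]; simp [stdContactFormD, hv, hp, hS]
  have hsum : ∑ j : Fin n, (p.1 j * (Y p).2.1 j - p.2.1 j * (Y p).1 j) = -S := by
    rw [hS, ← Finset.sum_neg_distrib]
    apply Finset.sum_congr rfl
    intro j _
    simp [hp]; ring
  have e1' : (Y p).2.2 + -S = -h p := by
    rw [← hsum]; exact e1
  linarith
end

section
/- Let n ≥ 1, let ε > 0, let g : ℝ → ℝ be a smooth function with g ≥ 0, and let f_j : [0,∞) → ℝ (j = 1,…,n) be smooth, nonnegative, nonincreasing functions. Define h : ℝ^{2n+1} → ℝ by h(x,y,z) = ε + g(z)·∏_{j=1}^n f_j(r_j), where r_j = √(x_j² + y_j²), and assume h is differentiable. Let Y : ℝ^{2n+1} → ℝ^{2n+1} be a contact Hamiltonian vector field of h with respect to α. Then for every integral curve γ : I → ℝ^{2n+1} of Y defined on an interval I (i.e. γ'(t) = Y(γ(t)) for all t ∈ I), the function t ↦ z(γ(t)) is strictly decreasing on I; in particular, Y has no nonconstant periodic integral curves. -/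
lemma antitone_hasDerivAt_nonpos {φ : ℝ → ℝ} {d x : ℝ} (hmono : Antitone φ)
    (hd : HasDerivAt φ d x) : d ≤ 0 := by
  have h1 : Filter.Tendsto (slope φ x) (nhdsWithin x (Set.Ioi x)) (nhds d) :=
    (hasDerivAt_iff_tendsto_slope.1 hd).mono_left
      (nhdsWithin_mono _ (fun y hy => Set.mem_compl_singleton_iff.2 (ne_of_gt hy)))
  refine le_of_tendsto h1 ?_
  filter_upwards [self_mem_nhdsWithin] with y hy
  have hxy : x < y := hy
  have : φ y ≤ φ x := hmono hxy.le
  rw [slope_def_field]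
  exact div_nonpos_of_nonpos_of_nonneg (by linarith) (by linarith)

theorem z_strictAnti_along_flow (n : ℕ) (hn : 1 ≤ n) (ε : ℝ) (hε : 0 < ε)
    (g : ℝ → ℝ) (hg : ContDiff ℝ (⊤ : ℕ∞) g) (hg0 : ∀ t, 0 ≤ g t)
    (f : Fin n → ℝ → ℝ)
    (hf : ∀ j, ContDiffOn ℝ (⊤ : ℕ∞) (f j) (Set.Ici 0))
    (hf0 : ∀ j, ∀ t ∈ Set.Ici (0 : ℝ), 0 ≤ f j t)
    (hfmono : ∀ j, AntitoneOn (f j) (Set.Ici 0))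
    (h : EucOdd n → ℝ)
    (hdef : ∀ p : EucOdd n,
      h p = ε + g p.2.2 * ∏ j : Fin n, f j (Real.sqrt ((p.1 j) ^ 2 + (p.2.1 j) ^ 2)))
    (hdiff : Differentiable ℝ h)
    (Y : EucOdd n → EucOdd n) (hY : IsContactHamVF n h Y) :
    (∀ (I : Set ℝ), I.OrdConnected → ∀ γ : ℝ → EucOdd n,
      (∀ t ∈ I, HasDerivAt γ (Y (γ t)) t) →
      StrictAntiOn (fun t => (γ t).2.2) I) ∧
    ¬ ∃ γ : ℝ → EucOdd n,
        (∀ t, HasDerivAt γ (Y (γ t)) t) ∧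
        (∃ T > (0 : ℝ), ∀ t, γ (t + T) = γ t) ∧
        (∃ t s, γ t ≠ γ s) := by
  -- Key: the z-component of Y is ≤ -ε everywhere.
  have key : ∀ p : EucOdd n, (p.2).2 = (p.2).2 → (Y p).2.2 ≤ -ε := by
    rintro ⟨px, py, pz⟩ -
    -- radial scaling curve
    set c : ℝ → EucOdd n := fun s =>
      (fun j => Real.exp s * px j, fun j => Real.exp s * py j, pz) with hc
    have hr : ∀ (s : ℝ) (j : Fin n),
        Real.sqrt ((Real.exp s * px j) ^ 2 + (Real.exp s * py j) ^ 2)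
          = Real.exp s * Real.sqrt ((px j) ^ 2 + (py j) ^ 2) := by
      intro s j
      rw [mul_pow, mul_pow, ← mul_add, Real.sqrt_mul (sq_nonneg _),
        Real.sqrt_sq (Real.exp_pos s).le]
    have hc0 : c 0 = (px, py, pz) := by
      simp [hc, Real.exp_zero]
    have hcd : HasDerivAt c (px, py, (0 : ℝ)) 0 := by
      refine HasDerivAt.prodMk ?_ (HasDerivAt.prodMk ?_ (hasDerivAt_const 0 pz))
      · exact hasDerivAt_pi.2 fun j => by
          simpa using (Real.hasDerivAt_exp 0).mul_const (px j)
      · exact hasDerivAt_pi.2 fun j => by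
          simpa using (Real.hasDerivAt_exp 0).mul_const (py j)
    have hanti : Antitone (h ∘ c) := by
      intro s s' hss'
      simp only [Function.comp_apply, hdef, hc]
      simp only [hr]
      have hle : ∀ j : Fin n,
          f j (Real.exp s' * Real.sqrt ((px j) ^ 2 + (py j) ^ 2))
            ≤ f j (Real.exp s * Real.sqrt ((px j) ^ 2 + (py j) ^ 2)) := by
        intro j
        exact hfmono j (mul_nonneg (Real.exp_pos _).le (Real.sqrt_nonneg _))
          (mul_nonneg (Real.exp_pos _).le (Real.sqrt_nonneg _))
          (mul_le_mul_of_nonneg_right (Real.exp_le_exp.2 hss') (Real.sqrt_nonneg _))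
      have hprod : (∏ j : Fin n, f j (Real.exp s' * Real.sqrt ((px j) ^ 2 + (py j) ^ 2)))
          ≤ ∏ j : Fin n, f j (Real.exp s * Real.sqrt ((px j) ^ 2 + (py j) ^ 2)) := by
        refine Finset.prod_le_prod (fun j _ => ?_) (fun j _ => hle j)
        exact hf0 j _ (mul_nonneg (Real.exp_pos _).le (Real.sqrt_nonneg _))
      have := mul_le_mul_of_nonneg_left hprod (hg0 pz)
      linarith
    have hD : HasDerivAt (h ∘ c) (fderiv ℝ h (px, py, pz) (px, py, (0 : ℝ))) 0 := by
      have h1 : HasFDerivAt h (fderiv ℝ h (px, py, pz)) (c 0) := by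
        rw [hc0]; exact (hdiff _).hasFDerivAt
      exact h1.comp_hasDerivAt 0 hcd
    have Dnonpos : fderiv ℝ h (px, py, pz) (px, py, (0 : ℝ)) ≤ 0 :=
      antitone_hasDerivAt_nonpos hanti hD
    -- contact equations
    have hαv : stdContactForm n (px, py, pz) (-px, -py, 0) = 0 := by
      simp only [stdContactForm, zero_add]
      rw [Finset.sum_eq_zero]
      intro j _
      simp only [Pi.neg_apply]
      ring
    have hneg : ((-px, -py, (0 : ℝ)) : EucOdd n) = -((px, py, (0 : ℝ)) : EucOdd n) := by
      simp [Prod.ext_iff]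
    have hfneg : fderiv ℝ h (px, py, pz) (-px, -py, (0 : ℝ))
        = -(fderiv ℝ h (px, py, pz) (px, py, (0 : ℝ))) := by
      rw [hneg, map_neg]
    have eq2 := (hY (px, py, pz) (-px, -py, 0)).2
    rw [hαv, mul_zero, sub_zero, hfneg] at eq2
    have h2 : stdContactFormD n (px, py, pz) (Y (px, py, pz)) (-px, -py, 0)
        = 2 * ∑ j : Fin n,
            (px j * (Y (px, py, pz)).2.1 j - py j * (Y (px, py, pz)).1 j) := by
      simp only [stdContactFormD]
      congr 1
      refine Finset.sum_congr rfl fun j _ => ?_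
      simp only [Pi.neg_apply]
      ring
    rw [h2] at eq2
    have hS : 0 ≤ ∑ j : Fin n,
        (px j * (Y (px, py, pz)).2.1 j - py j * (Y (px, py, pz)).1 j) := by linarith
    have hhP : ε ≤ h (px, py, pz) := by
      rw [hdef]
      have : 0 ≤ g pz * ∏ j : Fin n, f j (Real.sqrt ((px j) ^ 2 + (py j) ^ 2)) :=
        mul_nonneg (hg0 _) (Finset.prod_nonneg fun j _ => hf0 j _ (Real.sqrt_nonneg _))
      simpa using this
    have eq1 := (hY (px, py, pz) 0).1
    simp only [stdContactForm] at eq1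
    linarith
  have part1 : ∀ (I : Set ℝ), I.OrdConnected → ∀ γ : ℝ → EucOdd n,
      (∀ t ∈ I, HasDerivAt γ (Y (γ t)) t) →
      StrictAntiOn (fun t => (γ t).2.2) I := by
    intro I hI γ hγ
    have hconv : Convex ℝ I := convex_iff_ordConnected.2 hI
    refine strictAntiOn_of_deriv_neg hconv ?_ ?_
    · intro t ht
      exact ((hγ t ht).continuousAt.snd.snd).continuousWithinAt
    · intro x hx
      have hx' : x ∈ I := interior_subset hx
      have hz : HasDerivAt (fun t => (γ t).2.2) ((Y (γ x)).2.2) x := by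
        have := ((hγ x hx').hasFDerivAt.snd).snd
        simpa using this.hasDerivAt
      rw [hz.deriv]
      exact lt_of_le_of_lt (key (γ x) rfl) (by linarith)
  refine ⟨part1, ?_⟩
  rintro ⟨γ, hγ, ⟨T, hT, hper⟩, -⟩
  have h1 := part1 Set.univ Set.ordConnected_univ γ (fun t _ => hγ t)
  have h2 : (γ T).2.2 < (γ 0).2.2 := h1 (Set.mem_univ 0) (Set.mem_univ T) hT
  have h3 : γ T = γ 0 := by simpa using hper 0
  rw [h3] at h2
  exact lt_irrefl _ h2
end

section
/- For all integers k ≥ 1, s_{k+1} − s_k ≥ 4m − 2; in particular, the sequence (s_k)_{k ≥ 1} is strictly increasing. -/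
/-- `s k` for `k ≥ 1`: `s k = (k/p)·((4m−2)·p + 4) − 2m` if `p ∣ k`, and
`s k = (4m−2)·k + 2·⌊2k/p⌋ − 2m + 2` otherwise.  (For `k ≥ 1` and `p ≥ 3`,
integer division agrees with the floor of the rational quotient.) -/
def sSeq (m p k : ℤ) : ℤ :=
  if p ∣ k then (k / p) * ((4 * m - 2) * p + 4) - 2 * m
  else (4 * m - 2) * k + 2 * ((2 * k) / p) - 2 * m + 2

/-!
Both branches of `sSeq` are `g k := (4m−2)k + 2⌊2k/p⌋ − 2m + 2`, minus `2` when `p ∣ k`. The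
function `g` grows by at least `4m − 2` at every step, and by at least `4m` on a step `k → k + 1`
with `p ∣ k + 1`, since `⌊2k/p⌋` then jumps; this absorbs the correction `−2` at multiples of `p`.
-/

theorem sSeq_of_dvd (m : ℤ) {p k : ℤ} (h : p ∣ k) :
    sSeq m p k = (4 * m - 2) * k + 2 * (2 * k / p) - 2 * m := by
  obtain ⟨q, rfl⟩ := h
  rcases eq_or_ne p 0 with rfl | hp
  · simp [sSeq]
  · rw [sSeq, if_pos (dvd_mul_right p q), Int.mul_ediv_cancel_left q hp, mul_left_comm 2 p q,
      Int.mul_ediv_cancel_left _ hp]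
    ring

theorem sSeq_of_not_dvd (m : ℤ) {p k : ℤ} (h : ¬p ∣ k) :
    sSeq m p k = (4 * m - 2) * k + 2 * (2 * k / p) - 2 * m + 2 :=
  if_neg h

theorem Int.ediv_lt_ediv_of_lt_of_dvd {a b p : ℤ} (hp : 0 < p) (hab : a < b) (hb : p ∣ b) :
    a / p < b / p := by
  obtain ⟨q, rfl⟩ := hb
  rw [Int.mul_ediv_cancel_left q hp.ne']
  exact Int.ediv_lt_of_lt_mul hp (by linarith)

theorem sSeq_succ_sub_ge (m : ℤ) {p : ℤ} (hp : 0 < p) (k : ℤ) :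
    4 * m - 2 ≤ sSeq m p (k + 1) - sSeq m p k := by
  have hmono : 2 * k / p ≤ 2 * (k + 1) / p := Int.ediv_le_ediv hp (by omega)
  by_cases hk1 : p ∣ k + 1
  · have hjump : 2 * k / p < 2 * (k + 1) / p :=
      Int.ediv_lt_ediv_of_lt_of_dvd hp (by omega) (dvd_mul_of_dvd_right hk1 2)
    by_cases hk : p ∣ k
    · rw [sSeq_of_dvd m hk1, sSeq_of_dvd m hk]; linarith
    · rw [sSeq_of_dvd m hk1, sSeq_of_not_dvd m hk]; linarith
  · by_cases hk : p ∣ k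
    · rw [sSeq_of_not_dvd m hk1, sSeq_of_dvd m hk]; linarith
    · rw [sSeq_of_not_dvd m hk1, sSeq_of_not_dvd m hk]; linarith

theorem sSeq_strictMono {m p : ℤ} (hm : 1 ≤ m) (hp : 0 < p) : StrictMono (sSeq m p) :=
  strictMono_int_of_lt_succ fun k => by linarith [sSeq_succ_sub_ge m hp k]

theorem sSeq_strict_growth (m p : ℤ) (hm : 1 ≤ m) (hp : 3 ≤ p) :
    (∀ k : ℤ, 1 ≤ k → sSeq m p (k + 1) - sSeq m p k ≥ 4 * m - 2) ∧
    (∀ k l : ℤ, 1 ≤ k → k < l → sSeq m p k < sSeq m p l) :=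
  ⟨fun k _ => sSeq_succ_sub_ge m (by omega) k,
    fun _ _ _ hkl => sSeq_strictMono hm (by omega) hkl⟩
end
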